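/- There exists a may-must argumentation F = (A, R, f_Q) and an argument a ∈ A such that for every labelling λ : A → {in, out, undec}, λ does not designate λ(a) for a; consequently, F has no exact labelling. Concretely, this holds for the single self-attacking argument a with f_Q(a) = ((0,0),(1,1)). -/

import Mathlib

inductive Lab : Type
  | inn | out | undec
deriving DecidableEq

structure MMA (A : Type) [Fintype A] [DecidableEq A] where
  R : A → A → Prop
  decR : DecidableRel R
  n1 : A → ℕ
  n2 : A → ℕ
  m1 : A → ℕ
  m2 : A → ℕ
  hn : ∀ a, n1 a ≤ n2 a
  hm : ∀ a, m1 a ≤ m2 a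

variable {A : Type} [Fintype A] [DecidableEq A]

/-- Number of attackers of `a` labelled `out` by `lam`. -/
def outCnt (F : MMA A) (lam : A → Lab) (a : A) : ℕ :=
  letI := F.decR
  (Finset.univ.filter (fun b => F.R b a ∧ lam b = Lab.out)).card

/-- Number of attackers of `a` labelled `in` by `lam`. -/
def inCnt (F : MMA A) (lam : A → Lab) (a : A) : ℕ :=
  letI := F.decR
  (Finset.univ.filter (fun b => F.R b a ∧ lam b = Lab.inn)).card

/-- `lam` designates label `l` for argument `a` in `F`. -/
def designates (F : MMA A) (lam : A → Lab) (a : A) : Lab → Prop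
  | Lab.inn => F.n1 a ≤ outCnt F lam a ∧ inCnt F lam a < F.m2 a
  | Lab.out => F.m1 a ≤ inCnt F lam a ∧ outCnt F lam a < F.n2 a
  | Lab.undec =>
      (F.n2 a ≤ outCnt F lam a ∧ F.m2 a ≤ inCnt F lam a) ∨
      (F.n1 a ≤ outCnt F lam a ∧ outCnt F lam a < F.n2 a) ∨
      (F.m1 a ≤ inCnt F lam a ∧ inCnt F lam a < F.m2 a) ∨
      (outCnt F lam a < F.n1 a ∧ inCnt F lam a < F.m1 a)

/-- `a`'s label is proper under `lam`. -/
def proper (F : MMA A) (lam : A → Lab) (a : A) : Prop :=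
  designates F lam a (lam a)

/-- Exact labelling: every argument's label is proper. -/
def exactLab (F : MMA A) (lam : A → Lab) : Prop :=
  ∀ a, proper F lam a

/-- Pre-maximally proper labelling. -/
def preMaxProper (F : MMA A) (lam : A → Lab) : Prop :=
  ∀ a, proper F lam a ∨ lam a = Lab.undec

/-- Maximally proper labelling. -/
def maxProper (F : MMA A) (lam : A → Lab) : Prop :=
  preMaxProper F lam ∧
    ∀ lam', preMaxProper F lam' → ∀ a, proper F lam' a → proper F lam a

/-- The order `⪯` on labellings. -/
def labLE (l1 l2 : A → Lab) : Prop :=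
  ∀ a, (l1 a = Lab.inn → l2 a = Lab.inn) ∧ (l1 a = Lab.out → l2 a = Lab.out)

def selfAttacker : MMA (Fin 1) where
  R _ _ := True
  decR _ _ := instDecidableTrue
  n1 _ := 0
  n2 _ := 0
  m1 _ := 1
  m2 _ := 1
  hn _ := le_rfl
  hm _ := le_rfl

theorem selfAttacker_outCnt (lam : Fin 1 → Lab) :
    outCnt selfAttacker lam 0 = if lam 0 = Lab.out then 1 else 0 := by
  simp [outCnt, selfAttacker, Finset.filter_singleton, apply_ite Finset.card]

theorem selfAttacker_inCnt (lam : Fin 1 → Lab) :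
    inCnt selfAttacker lam 0 = if lam 0 = Lab.inn then 1 else 0 := by
  simp [inCnt, selfAttacker, Finset.filter_singleton, apply_ite Finset.card]

/- Labelling `a` `in` makes its only attacker `in`, breaking `i < m₂ = 1`; labelling it `out`
leaves `i = 0 < m₁`; labelling it `undec` gives `o = i = 0`, and then `o < n₁ = n₂ = 0` is
impossible while `i` misses both `m₁ = m₂ = 1` clauses. -/
theorem selfAttacker_not_designates (lam : Fin 1 → Lab) :
    ¬ designates selfAttacker lam 0 (lam 0) := by
  have hout := selfAttacker_outCnt lam
  have hin := selfAttacker_inCnt lam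
  cases h : lam 0 <;> simp_all [designates, selfAttacker]

theorem not_exists_exactLab_of_not_designates (F : MMA A) (a : A)
    (h : ∀ lam, ¬ designates F lam a (lam a)) : ¬ ∃ lam, exactLab F lam :=
  fun ⟨lam, hlam⟩ => h lam (hlam a)

theorem stmt3 :
    ∃ F : MMA (Fin 1),
      F.R 0 0 ∧ F.n1 0 = 0 ∧ F.n2 0 = 0 ∧ F.m1 0 = 1 ∧ F.m2 0 = 1 ∧
      (∃ a : Fin 1, ∀ lam : Fin 1 → Lab, ¬ designates F lam a (lam a)) ∧
      ¬ ∃ lam : Fin 1 → Lab, exactLab F lam :=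
  ⟨selfAttacker, trivial, rfl, rfl, rfl, rfl, ⟨0, selfAttacker_not_designates⟩,
    not_exists_exactLab_of_not_designates _ 0 selfAttacker_not_designates⟩
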